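/- arXiv:2305.10416 — 3 statements merged into one kernel-verified Lean document; each statement's English description precedes it below -/
import Mathlib

section
/- Let Q be a Markov kernel from X to Z admitting strictly positive densities q(z|x) with respect to a reference measure μ, satisfying sup_{x,x',z} q(z|x)/q(z|x') ≤ e^α. Then for any two probability measures P, P̃ on X, with M, M̃ the respective pushforwards through the channel (i.e. M has density z ↦ ∫ q(z|x) dP(x)), one has d_{KL}(M, M̃) + d_{KL}(M̃, M) ≤ (e^α − 1)² · d_{TV}(P, P̃)², where d_{TV}(P, P̃) = ∫ |dP − dP̃| is total variation (with the convention that it equals twice the usual TV distance). -/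
open MeasureTheory Real

section Aux

variable {X Z : Type*} [MeasurableSpace X] [MeasurableSpace Z]

lemma stmt4_integrable (q : Z → X → ℝ) (E : ℝ)
    (hmeas : Measurable fun p : Z × X => q p.1 p.2) (hpos : ∀ z x, 0 < q z x)
    (hLDP : ∀ z x x', q z x ≤ E * q z x') (x0 : X)
    (ν : Measure X) [IsFiniteMeasure ν] (z : Z) :
    Integrable (fun x => q z x) ν := by
  have hqm : Measurable fun x => q z x := hmeas.comp (measurable_const.prodMk measurable_id)
  refine (integrable_const (E * q z x0)).mono' hqm.aestronglyMeasurable ?_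
  filter_upwards with x
  rw [Real.norm_eq_abs, abs_of_pos (hpos z x)]
  exact hLDP z x x0

lemma stmt4_nonempty (R : Measure X) [IsProbabilityMeasure R] : Nonempty X := by
  by_contra h
  rw [not_nonempty_iff] at h
  have h1 : (R Set.univ) = 1 := measure_univ
  rw [Set.univ_eq_empty_iff.mpr h, measure_empty] at h1
  exact zero_ne_one h1

lemma stmt4_upper (q : Z → X → ℝ) (E : ℝ) (hE : 0 < E)
    (hmeas : Measurable fun p : Z × X => q p.1 p.2) (hpos : ∀ z x, 0 < q z x)
    (hLDP : ∀ z x x', q z x ≤ E * q z x')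
    (ν R : Measure X) [IsFiniteMeasure ν] [IsProbabilityMeasure R] (z : Z) :
    ∫ x, q z x ∂ν ≤ E * (ν Set.univ).toReal * ∫ x, q z x ∂ R := by
  obtain ⟨x0⟩ := stmt4_nonempty R
  have hint := stmt4_integrable q E hmeas hpos hLDP x0
  have step1 : ∀ x', ∫ x, q z x ∂ν ≤ (ν Set.univ).toReal * (E * q z x') := by
    intro x'
    calc ∫ x, q z x ∂ν ≤ ∫ _x, E * q z x' ∂ν :=
          integral_mono (hint ν z) (integrable_const _) fun x => hLDP z x x'
      _ = (ν Set.univ).toReal * (E * q z x') := by rw [integral_const, smul_eq_mul, measureReal_def]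
  calc ∫ x, q z x ∂ν = ∫ _x', (∫ x, q z x ∂ν) ∂ R := by
        rw [integral_const, probReal_univ, one_smul]
    _ ≤ ∫ x', (ν Set.univ).toReal * (E * q z x') ∂ R :=
        integral_mono (integrable_const _) (((hint R z).const_mul E).const_mul _) step1
    _ = (ν Set.univ).toReal * (E * ∫ x, q z x ∂ R) := by
        rw [integral_const_mul, integral_const_mul]
    _ = E * (ν Set.univ).toReal * ∫ x, q z x ∂ R := by ring

lemma stmt4_lower (q : Z → X → ℝ) (E : ℝ) (hE : 0 < E)
    (hmeas : Measurable fun p : Z × X => q p.1 p.2) (hpos : ∀ z x, 0 < q z x)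
    (hLDP : ∀ z x x', q z x ≤ E * q z x')
    (ν R : Measure X) [IsFiniteMeasure ν] [IsProbabilityMeasure R] (z : Z) :
    E⁻¹ * (ν Set.univ).toReal * ∫ x, q z x ∂ R ≤ ∫ x, q z x ∂ν := by
  obtain ⟨x0⟩ := stmt4_nonempty R
  have hint := stmt4_integrable q E hmeas hpos hLDP x0
  have hpt : ∀ (x x' : X), E⁻¹ * q z x' ≤ q z x := by
    intro x x'
    calc E⁻¹ * q z x' ≤ E⁻¹ * (E * q z x) :=
          mul_le_mul_of_nonneg_left (hLDP z x' x) (inv_pos.mpr hE).le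
      _ = q z x := by field_simp
  have step1 : ∀ x', (ν Set.univ).toReal * (E⁻¹ * q z x') ≤ ∫ x, q z x ∂ν := by
    intro x'
    calc (ν Set.univ).toReal * (E⁻¹ * q z x') = ∫ _x, E⁻¹ * q z x' ∂ν := by
          rw [integral_const, smul_eq_mul, measureReal_def]
      _ ≤ ∫ x, q z x ∂ν :=
          integral_mono (integrable_const _) (hint ν z) fun x => hpt x x'
  calc E⁻¹ * (ν Set.univ).toReal * ∫ x, q z x ∂ R
      = ∫ x', (ν Set.univ).toReal * (E⁻¹ * q z x') ∂ R := by
        rw [integral_const_mul, integral_const_mul]; ring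
    _ ≤ ∫ _x', (∫ x, q z x ∂ν) ∂ R :=
        integral_mono (((hint R z).const_mul E⁻¹).const_mul _) (integrable_const _) step1
    _ = ∫ x, q z x ∂ν := by
        rw [integral_const, probReal_univ, one_smul]

lemma stmt4_log_case {a b C : ℝ} (ha : 0 < a) (hb : 0 < b) (hba : b ≤ a) (h1 : a - b ≤ C * b) :
    (a - b) * Real.log (a / b) ≤ C ^ 2 * b := by
  have hab : (0:ℝ) < a / b := div_pos ha hb
  have hlog : Real.log (a / b) ≤ (a - b) / b := by
    have h := Real.log_le_sub_one_of_pos hab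
    have h2 : a / b - 1 = (a - b) / b := by field_simp
    linarith [h2 ▸ h]
  have h0 : 0 ≤ a - b := by linarith
  have hsq : (a - b) ^ 2 ≤ (C * b) ^ 2 := pow_le_pow_left₀ h0 h1 2
  calc (a - b) * Real.log (a / b) ≤ (a - b) * ((a - b) / b) :=
        mul_le_mul_of_nonneg_left hlog h0
    _ = (a - b) ^ 2 / b := by ring
    _ ≤ (C * b) ^ 2 / b := by
        apply div_le_div_of_nonneg_right hsq hb.le
    _ = C ^ 2 * b := by field_simp

lemma stmt4_log {a b C : ℝ} (ha : 0 < a) (hb : 0 < b) (h1 : a - b ≤ C * b) (h2 : b - a ≤ C * a) :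
    (a - b) * Real.log (a / b) ≤ C ^ 2 * a := by
  rcases le_total b a with h | h
  · have key := stmt4_log_case ha hb h h1
    have hC2 : 0 ≤ C ^ 2 := sq_nonneg C
    nlinarith
  · have key := stmt4_log_case hb ha h h2
    have heq : (a - b) * Real.log (a / b) = (b - a) * Real.log (b / a) := by
      rw [Real.log_div ha.ne' hb.ne', Real.log_div hb.ne' ha.ne']
      ring
    rw [heq]
    exact key

end Aux

/-- d = 1 case of the main KL-contraction theorem.
`q z x` is the channel density of `Q(dz|x)` w.r.t. `μ`, satisfying the `α`-LDP
constraint `q z x ≤ e^α · q z x'`. For raw laws `P, Pt` with privatized laws of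
densities `m z = ∫ q z x dP(x)` and `mt z = ∫ q z x dPt(x)`, the symmetrized KL
divergence `d_KL(M, Mt) + d_KL(Mt, M)` is bounded by
`(e^α − 1)² · d_TV(P, Pt)²`, where `d_TV(P, Pt) = ∫ |dP − dPt|` is the total
variation mass of the difference (twice the usual TV distance). -/
theorem stmt_4 {X Z : Type*} [MeasurableSpace X] [MeasurableSpace Z]
    (μ : Measure Z) (q : Z → X → ℝ) (α : ℝ) (hα : 0 ≤ α)
    (hmeas : Measurable fun p : Z × X => q p.1 p.2)
    (hpos : ∀ z x, 0 < q z x)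
    (hnorm : ∀ x, ∫ z, q z x ∂μ = 1)
    (hLDP : ∀ z x x', q z x ≤ Real.exp α * q z x')
    (P Pt : Measure X) [IsProbabilityMeasure P] [IsProbabilityMeasure Pt] :
    ((∫ z, (∫ x, q z x ∂P) * Real.log ((∫ x, q z x ∂P) / ∫ x, q z x ∂Pt) ∂μ) +
        ∫ z, (∫ x, q z x ∂Pt) * Real.log ((∫ x, q z x ∂Pt) / ∫ x, q z x ∂P) ∂μ)
      ≤ (Real.exp α - 1) ^ 2 *
          (((P.toSignedMeasure - Pt.toSignedMeasure).totalVariation Set.univ).toReal) ^ 2 := by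
  set E := Real.exp α with hEdef
  have hE : 0 < E := Real.exp_pos α
  have hE1 : 1 ≤ E := Real.one_le_exp hα
  obtain ⟨x0⟩ := stmt4_nonempty P
  have hint := stmt4_integrable q E hmeas hpos hLDP x0
  -- positivity and upper bounds of the mixture densities
  have hm_le : ∀ (R : Measure X) [IsProbabilityMeasure R] (z : Z),
      (∫ x, q z x ∂ R) ≤ E * q z x0 := by
    intro R _ z
    calc (∫ x, q z x ∂ R) ≤ ∫ _x, E * q z x0 ∂ R :=
          integral_mono (hint R z) (integrable_const _) fun x => hLDP z x x0
      _ = E * q z x0 := by rw [integral_const, probReal_univ, one_smul]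
  have hm_pos : ∀ (R : Measure X) [IsProbabilityMeasure R] (z : Z),
      0 < ∫ x, q z x ∂ R := by
    intro R _ z
    have hpt : ∀ x, E⁻¹ * q z x0 ≤ q z x := by
      intro x
      calc E⁻¹ * q z x0 ≤ E⁻¹ * (E * q z x) :=
            mul_le_mul_of_nonneg_left (hLDP z x0 x) (inv_pos.mpr hE).le
        _ = q z x := by field_simp
    have h1 : ∫ x, E⁻¹ * q z x0 ∂ R ≤ ∫ x, q z x ∂ R :=
      integral_mono (integrable_const _) (hint R z) hpt
    rw [integral_const, probReal_univ, one_smul] at h1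
    have h2 : 0 < E⁻¹ * q z x0 := mul_pos (inv_pos.mpr hE) (hpos z x0)
    linarith
  -- Jordan decomposition of the difference
  set ξ := P.toSignedMeasure - Pt.toSignedMeasure with hξdef
  set νp := ξ.toJordanDecomposition.posPart with hνp
  set νn := ξ.toJordanDecomposition.negPart with hνn
  have hsets : ∀ t : Set X, MeasurableSet t → P t + νn t = Pt t + νp t := by
    intro t ht
    have h1 := congrArg (fun v : SignedMeasure X => v t) ξ.toSignedMeasure_toJordanDecomposition
    simp only [JordanDecomposition.toSignedMeasure] at h1
    rw [Measure.toSignedMeasure_sub_apply ht, Measure.toSignedMeasure_sub_apply ht] at h1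
    have h2 : ((P t + νn t)).toReal = ((Pt t + νp t)).toReal := by
      rw [ENNReal.toReal_add (measure_ne_top _ _) (measure_ne_top _ _),
        ENNReal.toReal_add (measure_ne_top _ _) (measure_ne_top _ _)]
      simp only [measureReal_def, ← hνp, ← hνn] at h1
      linarith
    exact (ENNReal.toReal_eq_toReal_iff'
      (ENNReal.add_ne_top.mpr ⟨measure_ne_top _ _, measure_ne_top _ _⟩)
      (ENNReal.add_ne_top.mpr ⟨measure_ne_top _ _, measure_ne_top _ _⟩)).mp h2
  have hPν : P + νn = Pt + νp := by
    ext t ht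
    rw [Measure.add_apply, Measure.add_apply]
    exact hsets t ht
  have hmass : νn Set.univ = νp Set.univ := by
    have h := hsets Set.univ MeasurableSet.univ
    rw [show P Set.univ = 1 from measure_univ, show Pt Set.univ = 1 from measure_univ] at h
    exact (ENNReal.add_right_inj ENNReal.one_ne_top).mp h
  set s := (νp Set.univ).toReal with hsdef
  have hs0 : 0 ≤ s := ENNReal.toReal_nonneg
  have hνn_s : (νn Set.univ).toReal = s := by rw [hmass]
  have hTV : ((ξ.totalVariation) Set.univ).toReal = 2 * s := by
    rw [SignedMeasure.totalVariation, Measure.add_apply,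
      ENNReal.toReal_add (measure_ne_top _ _) (measure_ne_top _ _), ← hνp, ← hνn, hνn_s]
    ring
  have hsplit : ∀ z, (∫ x, q z x ∂P) + ∫ x, q z x ∂νn
      = (∫ x, q z x ∂Pt) + ∫ x, q z x ∂νp := by
    intro z
    rw [← integral_add_measure (hint P z) (hint νn z),
      ← integral_add_measure (hint Pt z) (hint νp z), hPν]
  set C := (E - E⁻¹) * s with hCdef
  have hEinv1 : E⁻¹ ≤ 1 := inv_le_one_of_one_le₀ hE1
  have hC0 : 0 ≤ C := mul_nonneg (by linarith) hs0
  have hdiff1 : ∀ z, (∫ x, q z x ∂P) - (∫ x, q z x ∂Pt) ≤ C * ∫ x, q z x ∂Pt := by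
    intro z
    have hu := stmt4_upper q E hE hmeas hpos hLDP νp Pt z
    have hl := stmt4_lower q E hE hmeas hpos hLDP νn Pt z
    rw [hνn_s] at hl
    rw [← hsdef] at hu
    have hsp := hsplit z
    have hring : C * ∫ x, q z x ∂Pt
        = E * s * (∫ x, q z x ∂Pt) - E⁻¹ * s * (∫ x, q z x ∂Pt) := by
      rw [hCdef]; ring
    linarith
  have hdiff2 : ∀ z, (∫ x, q z x ∂Pt) - (∫ x, q z x ∂P) ≤ C * ∫ x, q z x ∂P := by
    intro z
    have hu := stmt4_upper q E hE hmeas hpos hLDP νn P z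
    have hl := stmt4_lower q E hE hmeas hpos hLDP νp P z
    rw [hνn_s] at hu
    rw [← hsdef] at hl
    have hsp := hsplit z
    have hring : C * ∫ x, q z x ∂P
        = E * s * (∫ x, q z x ∂P) - E⁻¹ * s * (∫ x, q z x ∂P) := by
      rw [hCdef]; ring
    linarith
  -- ratio bounds and log bound
  have hmE : ∀ z, (∫ x, q z x ∂P) ≤ E * ∫ x, q z x ∂Pt := by
    intro z
    have h := stmt4_upper q E hE hmeas hpos hLDP P Pt z
    rw [measure_univ, ENNReal.toReal_one, mul_one] at h
    exact h
  have hmtE : ∀ z, (∫ x, q z x ∂Pt) ≤ E * ∫ x, q z x ∂P := by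
    intro z
    have h := stmt4_upper q E hE hmeas hpos hLDP Pt P z
    rw [measure_univ, ENNReal.toReal_one, mul_one] at h
    exact h
  have hlogbd : ∀ z, |Real.log ((∫ x, q z x ∂P) / ∫ x, q z x ∂Pt)| ≤ α := by
    intro z
    have hmz := hm_pos P z
    have hmtz := hm_pos Pt z
    have h1 : (∫ x, q z x ∂P) / (∫ x, q z x ∂Pt) ≤ E :=
      (div_le_iff₀ hmtz).mpr (by linarith [hmE z])
    have h2 : E⁻¹ ≤ (∫ x, q z x ∂P) / (∫ x, q z x ∂Pt) := by
      rw [le_div_iff₀ hmtz]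
      have := hmtE z
      calc E⁻¹ * ∫ x, q z x ∂Pt ≤ E⁻¹ * (E * ∫ x, q z x ∂P) :=
            mul_le_mul_of_nonneg_left this (inv_pos.mpr hE).le
        _ = ∫ x, q z x ∂P := by field_simp
    rw [abs_le]
    have hrpos : 0 < (∫ x, q z x ∂P) / (∫ x, q z x ∂Pt) := div_pos hmz hmtz
    constructor
    · have h3 : Real.log E⁻¹ ≤ Real.log ((∫ x, q z x ∂P) / (∫ x, q z x ∂Pt)) :=
        Real.log_le_log (inv_pos.mpr hE) h2
      rwa [Real.log_inv, hEdef, Real.log_exp] at h3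
      
    · have h3 : Real.log ((∫ x, q z x ∂P) / (∫ x, q z x ∂Pt)) ≤ Real.log E :=
        Real.log_le_log hrpos h1
      rwa [hEdef, Real.log_exp] at h3
  -- measurability and integrability over μ
  have hm_sm : StronglyMeasurable fun z => ∫ x, q z x ∂P :=
    hmeas.stronglyMeasurable.integral_prod_right'
  have hmt_sm : StronglyMeasurable fun z => ∫ x, q z x ∂Pt :=
    hmeas.stronglyMeasurable.integral_prod_right'
  have hqx_int : ∀ x, Integrable (fun z => q z x) μ := by
    intro x
    by_contra h
    have h1 := hnorm x
    rw [integral_undef h] at h1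
    exact zero_ne_one h1
  have hm_int : Integrable (fun z => ∫ x, q z x ∂P) μ := by
    refine ((hqx_int x0).const_mul E).mono' hm_sm.aestronglyMeasurable ?_
    filter_upwards with z
    rw [Real.norm_eq_abs, abs_of_pos (hm_pos P z)]
    exact hm_le P z
  have hmt_int : Integrable (fun z => ∫ x, q z x ∂Pt) μ := by
    refine ((hqx_int x0).const_mul E).mono' hmt_sm.aestronglyMeasurable ?_
    filter_upwards with z
    rw [Real.norm_eq_abs, abs_of_pos (hm_pos Pt z)]
    exact hm_le Pt z
  have hsf : SigmaFinite μ := by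
    refine MeasureTheory.Measure.sigmaFinite_of_countable (S := Set.range fun n : ℕ => {z | ((n : ℝ) + 1)⁻¹ ≤ q z x0})
      (Set.countable_range _) ?_ ?_
    · rintro t ⟨n, rfl⟩
      exact (hqx_int x0).measure_ge_lt_top (by positivity)
    · apply Set.eq_univ_of_forall
      intro z
      obtain ⟨n, hn⟩ := exists_nat_one_div_lt (hpos z x0)
      exact ⟨{w | ((n : ℝ) + 1)⁻¹ ≤ q w x0}, ⟨n, rfl⟩, by simpa [one_div] using hn.le⟩
  have hm_int_eq : ∫ z, (∫ x, q z x ∂P) ∂μ = 1 := by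
    have hunc : Integrable (Function.uncurry fun z x => q z x) (μ.prod P) := by
      refine (integrable_prod_iff hmeas.aestronglyMeasurable).mpr ⟨?_, ?_⟩
      · filter_upwards with z using hint P z
      · have heq : (fun z => ∫ x, ‖q z x‖ ∂P) = fun z => ∫ x, q z x ∂P := by
          funext z
          apply integral_congr_ae
          filter_upwards with x
          rw [Real.norm_eq_abs, abs_of_pos (hpos z x)]
        rw [heq]
        exact hm_int
    have hswap := integral_integral_swap (f := fun z x => q z x) hunc
    rw [hswap]
    calc ∫ x, (∫ z, q z x ∂μ) ∂P = ∫ _x, (1:ℝ) ∂P :=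
          integral_congr_ae (Filter.Eventually.of_forall fun x => hnorm x)
      _ = 1 := by rw [integral_const, probReal_univ, one_smul]
  have hm_meas : Measurable fun z => ∫ x, q z x ∂P := hm_sm.measurable
  have hmt_meas : Measurable fun z => ∫ x, q z x ∂Pt := hmt_sm.measurable
  have hlog_meas : Measurable fun z =>
      Real.log ((∫ x, q z x ∂P) / ∫ x, q z x ∂Pt) :=
    Real.measurable_log.comp (hm_meas.div hmt_meas)
  have hlog2_meas : Measurable fun z =>
      Real.log ((∫ x, q z x ∂Pt) / ∫ x, q z x ∂P) :=
    Real.measurable_log.comp (hmt_meas.div hm_meas)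
  have hlogbd2 : ∀ z, |Real.log ((∫ x, q z x ∂Pt) / ∫ x, q z x ∂P)| ≤ α := by
    intro z
    have heq : (∫ x, q z x ∂Pt) / (∫ x, q z x ∂P)
        = ((∫ x, q z x ∂P) / (∫ x, q z x ∂Pt))⁻¹ := (inv_div _ _).symm
    rw [heq, Real.log_inv, abs_neg]
    exact hlogbd z
  have hint1 : Integrable (fun z =>
      (∫ x, q z x ∂P) * Real.log ((∫ x, q z x ∂P) / ∫ x, q z x ∂Pt)) μ := by
    refine (hm_int.const_mul α).mono'
      ((hm_meas.mul hlog_meas).aestronglyMeasurable) ?_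
    filter_upwards with z
    rw [Real.norm_eq_abs, abs_mul, abs_of_pos (hm_pos P z)]
    have h1 := hlogbd z
    have h2 := (hm_pos P z).le
    nlinarith [abs_nonneg (Real.log ((∫ x, q z x ∂P) / ∫ x, q z x ∂Pt))]
  have hint2 : Integrable (fun z =>
      (∫ x, q z x ∂Pt) * Real.log ((∫ x, q z x ∂Pt) / ∫ x, q z x ∂P)) μ := by
    refine (hmt_int.const_mul α).mono'
      ((hmt_meas.mul hlog2_meas).aestronglyMeasurable) ?_
    filter_upwards with z
    rw [Real.norm_eq_abs, abs_mul, abs_of_pos (hm_pos Pt z)]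
    have h1 := hlogbd2 z
    have h2 := (hm_pos Pt z).le
    nlinarith [abs_nonneg (Real.log ((∫ x, q z x ∂Pt) / ∫ x, q z x ∂P))]
  have hcomb : ∀ z, (∫ x, q z x ∂P) * Real.log ((∫ x, q z x ∂P) / ∫ x, q z x ∂Pt)
      + (∫ x, q z x ∂Pt) * Real.log ((∫ x, q z x ∂Pt) / ∫ x, q z x ∂P)
      = ((∫ x, q z x ∂P) - (∫ x, q z x ∂Pt))
        * Real.log ((∫ x, q z x ∂P) / ∫ x, q z x ∂Pt) := by
    intro z
    have heq : Real.log ((∫ x, q z x ∂Pt) / ∫ x, q z x ∂P)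
        = - Real.log ((∫ x, q z x ∂P) / ∫ x, q z x ∂Pt) := by
      rw [← Real.log_inv, inv_div]
    rw [heq]
    ring
  calc ((∫ z, (∫ x, q z x ∂P) * Real.log ((∫ x, q z x ∂P) / ∫ x, q z x ∂Pt) ∂μ) +
        ∫ z, (∫ x, q z x ∂Pt) * Real.log ((∫ x, q z x ∂Pt) / ∫ x, q z x ∂P) ∂μ)
      = ∫ z, ((∫ x, q z x ∂P) * Real.log ((∫ x, q z x ∂P) / ∫ x, q z x ∂Pt)
          + (∫ x, q z x ∂Pt) * Real.log ((∫ x, q z x ∂Pt) / ∫ x, q z x ∂P)) ∂μ :=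
        (integral_add hint1 hint2).symm
    _ = ∫ z, ((∫ x, q z x ∂P) - (∫ x, q z x ∂Pt))
          * Real.log ((∫ x, q z x ∂P) / ∫ x, q z x ∂Pt) ∂μ :=
        integral_congr_ae (Filter.Eventually.of_forall hcomb)
    _ ≤ ∫ z, C ^ 2 * (∫ x, q z x ∂P) ∂μ := by
        refine integral_mono ?_ (hm_int.const_mul _) ?_
        · exact (hint1.add hint2).congr (Filter.Eventually.of_forall hcomb)
        · intro z
          exact stmt4_log (hm_pos P z) (hm_pos Pt z) (hdiff1 z) (hdiff2 z)
    _ = C ^ 2 * ∫ z, (∫ x, q z x ∂P) ∂μ := integral_const_mul _ _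
    _ = C ^ 2 := by rw [hm_int_eq, mul_one]
    _ ≤ (E - 1) ^ 2 * (2 * s) ^ 2 := by
        have h2 : 0 ≤ (E - 1) ^ 2 / E := div_nonneg (sq_nonneg _) hE.le
        have h3 : (E - 1) ^ 2 / E = E - 2 + E⁻¹ := by field_simp; ring
        have h1 : E - E⁻¹ ≤ 2 * (E - 1) := by rw [h3] at h2; linarith
        have hle : C ≤ (E - 1) * (2 * s) := by
          rw [hCdef]
          calc (E - E⁻¹) * s ≤ (2 * (E - 1)) * s := mul_le_mul_of_nonneg_right h1 hs0
            _ = (E - 1) * (2 * s) := by ring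
        calc C ^ 2 ≤ ((E - 1) * (2 * s)) ^ 2 := pow_le_pow_left₀ hC0 hle 2
          _ = (E - 1) ^ 2 * (2 * s) ^ 2 := by ring
    _ = (E - 1) ^ 2 * ((ξ.totalVariation Set.univ).toReal) ^ 2 := by rw [hTV]
end

section
/- (Bias of truncated product moments.) Let X = (X^1,...,X^d) be a random vector with ‖X^j‖_{k_j} < ∞ for k_j > 1 and Σ_{j=1}^d 1/k_j < 1, and let k̄ = d(Σ_j 1/k_j)^{−1} be the harmonic mean. For truncation levels T^{(j)} > 0, define the bias b = E[∏_{j=1}^d [X^j]_{T^{(j)}}] − E[∏_{j=1}^d X^j], where [x]_T = max(min(x,T), −T). Then |b| ≤ Σ_{l=1}^d (T^{(l)})^{−k_l(1 − d/k̄)} · (∏_{j≠l} ‖X^j‖_{k_j}) · ‖X^l‖_{k_l}^{1 + k_l(1 − d/k̄)}. -/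
open MeasureTheory Real Finset
open scoped ENNReal

noncomputable def truncR (T x : ℝ) : ℝ := max (min x T) (-T)

lemma abs_truncR_le {T x : ℝ} (hT : 0 ≤ T) : |truncR T x| ≤ |x| := by
  rw [truncR, abs_le]
  constructor
  · exact le_max_of_le_left (le_min (neg_abs_le x) ((neg_nonpos.mpr (abs_nonneg x)).trans hT))
  · exact max_le ((min_le_left _ _).trans (le_abs_self x))
      ((neg_nonpos.mpr hT).trans (abs_nonneg x))

lemma abs_truncR_le' {T x : ℝ} (hT : 0 ≤ T) : |truncR T x| ≤ T := by
  rw [truncR, abs_le]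
  refine ⟨le_max_right _ _, max_le (min_le_right _ _) (by linarith)⟩

lemma truncR_eq_self {T x : ℝ} (h : |x| ≤ T) : truncR T x = x := by
  rw [truncR, min_eq_left ((le_abs_self x).trans h),
    max_eq_left (neg_le.mpr ((neg_le_abs x).trans h))]

lemma abs_truncR_sub_le {T x : ℝ} (hT : 0 ≤ T) : |truncR T x - x| ≤ |x| := by
  have h1 := abs_nonneg x
  have h2 := le_abs_self x
  have h3 := neg_abs_le x
  rw [truncR, abs_le]
  constructor
  · have : x - |x| ≤ min x T := le_min (by linarith) (by linarith)
    have : x - |x| ≤ max (min x T) (-T) := this.trans (le_max_left _ _)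
    linarith
  · have : max (min x T) (-T) ≤ x + |x| :=
      max_le ((min_le_left _ _).trans (by linarith)) (by linarith)
    linarith

lemma abs_prod_sub_prod_le {ι : Type*} [DecidableEq ι] (s : Finset ι) (f g : ι → ℝ)
    (h : ∀ i, |f i| ≤ |g i|) :
    |(∏ i ∈ s, f i) - ∏ i ∈ s, g i| ≤
      ∑ l ∈ s, (∏ j ∈ s.erase l, |g j|) * |f l - g l| := by
  induction s using Finset.induction_on with
  | empty => simp
  | @insert a s ha ih =>
    rw [prod_insert ha, prod_insert ha, sum_insert ha]
    have key : f a * ∏ i ∈ s, f i - g a * ∏ i ∈ s, g i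
        = f a * ((∏ i ∈ s, f i) - ∏ i ∈ s, g i) + (f a - g a) * ∏ i ∈ s, g i := by ring
    rw [key]
    have step1 : |f a * ((∏ i ∈ s, f i) - ∏ i ∈ s, g i) + (f a - g a) * ∏ i ∈ s, g i|
        ≤ |g a| * (∑ l ∈ s, (∏ j ∈ s.erase l, |g j|) * |f l - g l|)
          + (∏ j ∈ s, |g j|) * |f a - g a| := by
      refine (abs_add_le _ _).trans ?_
      rw [abs_mul, abs_mul, abs_prod]
      rw [mul_comm |f a - g a|]
      exact add_le_add
        (mul_le_mul (h a) ih (abs_nonneg _) (abs_nonneg _)) le_rfl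
    refine step1.trans (le_of_eq ?_)
    rw [erase_insert ha, mul_sum, add_comm]
    congr 1
    refine Finset.sum_congr rfl fun l hl => ?_
    have hla : l ≠ a := fun hh => ha (hh ▸ hl)
    have haerase : a ∉ s.erase l := fun hh => ha (Finset.mem_of_mem_erase hh)
    rw [Finset.erase_insert_of_ne hla.symm, prod_insert haerase, mul_assoc]

/-- bias of truncated product moments: with `‖X^j‖_{k_j} < ∞`,
`k_j > 1`, `∑_j 1/k_j < 1` and `k̄ = d (∑_j 1/k_j)⁻¹` the harmonic mean, the
bias `E[∏_j [X^j]_{T_j}] − E[∏_j X^j]` is bounded by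
`∑_l T_l^{−k_l(1 − d/k̄)} (∏_{j≠l} ‖X^j‖_{k_j}) ‖X^l‖_{k_l}^{1 + k_l(1 − d/k̄)}`. -/
theorem stmt_10 {d : ℕ} (hd : 1 ≤ d) {Ω : Type*} [MeasurableSpace Ω]
    (μ : Measure Ω) [IsProbabilityMeasure μ]
    (X : Fin d → Ω → ℝ) (hmX : ∀ j, Measurable (X j))
    (k : Fin d → ℝ) (hk : ∀ j, 1 < k j) (hks : ∑ j, 1 / k j < 1)
    (hmom : ∀ j, Integrable (fun ω => |X j ω| ^ (k j)) μ)
    (hprod : Integrable (fun ω => ∏ j, X j ω) μ)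
    (T : Fin d → ℝ) (hT : ∀ j, 0 < T j) :
    |(∫ ω, ∏ j, truncR (T j) (X j ω) ∂μ) - ∫ ω, ∏ j, X j ω ∂μ|
      ≤ ∑ l, (T l) ^ (-(k l * (1 - (d : ℝ) / ((d : ℝ) / ∑ j, 1 / k j))))
          * (∏ j ∈ Finset.univ.erase l, (∫ ω, |X j ω| ^ (k j) ∂μ) ^ (1 / k j))
          * ((∫ ω, |X l ω| ^ (k l) ∂μ)
              ^ ((1 / k l) * (1 + k l * (1 - (d : ℝ) / ((d : ℝ) / ∑ j, 1 / k j))))) := by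
  classical
  haveI : NeZero d := ⟨Nat.one_le_iff_ne_zero.mp hd⟩
  have hd0 : (0 : ℝ) < d := by exact_mod_cast hd
  have hk0 : ∀ j, 0 < k j := fun j => lt_trans one_pos (hk j)
  have hs0pos : 0 < ∑ j, 1 / k j :=
    Finset.sum_pos (fun j _ => one_div_pos.mpr (hk0 j)) Finset.univ_nonempty
  have hdd : (d : ℝ) / ((d : ℝ) / ∑ j, 1 / k j) = ∑ j, 1 / k j := by
    rw [div_div_eq_mul_div, mul_comm, mul_div_assoc, div_self hd0.ne', mul_one]
  rw [hdd]
  set r : ℝ := 1 - ∑ j, 1 / k j with hrdef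
  have hr : 0 < r := by simp only [hrdef]; linarith
  -- notation
  set E : Fin d → ℝ := fun j => ∫ ω, |X j ω| ^ (k j) ∂μ with hEdef
  have hEnn : ∀ j, 0 ≤ E j := fun j => integral_nonneg fun ω => by positivity
  set N : Fin d → Ω → ℝ≥0∞ := fun j ω => ENNReal.ofReal |X j ω| with hNdef
  have hmN : ∀ j, Measurable (N j) := fun j => (hmX j).abs.ennreal_ofReal
  set S : Fin d → Set Ω := fun l => {ω | T l ≤ |X l ω|} with hSdef
  have hMS : ∀ l, MeasurableSet (S l) := fun l => measurableSet_le measurable_const (hmX l).abs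
  have hEL : ∀ j, ∫⁻ ω, (N j ω) ^ (k j) ∂μ = ENNReal.ofReal (E j) := by
    intro j
    have h1 : ∀ ω, (N j ω) ^ (k j) = ENNReal.ofReal (|X j ω| ^ k j) := fun ω =>
      ENNReal.ofReal_rpow_of_nonneg (abs_nonneg _) (hk0 j).le
    simp_rw [h1]
    exact (ofReal_integral_eq_lintegral_ofReal (hmom j)
      (ae_of_all _ fun ω => by positivity)).symm
  -- measurability / integrability of the products
  have hmA : Measurable fun ω => ∏ j, truncR (T j) (X j ω) := by
    refine Finset.measurable_prod _ fun j _ => ?_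
    exact ((hmX j).min measurable_const).max measurable_const
  have hmB : Measurable fun ω => ∏ j, X j ω := Finset.measurable_prod _ fun j _ => hmX j
  have hintA : Integrable (fun ω => ∏ j, truncR (T j) (X j ω)) μ := by
    refine Integrable.mono' (integrable_const (∏ j, T j)) hmA.aestronglyMeasurable
      (ae_of_all _ fun ω => ?_)
    rw [Real.norm_eq_abs, abs_prod]
    exact Finset.prod_le_prod (fun j _ => abs_nonneg _) fun j _ => abs_truncR_le' (hT j).le
  -- the pointwise bound
  have hptwise : ∀ ω, ENNReal.ofReal |(∏ j, truncR (T j) (X j ω)) - ∏ j, X j ω|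
      ≤ ∑ l, (S l).indicator (fun _ => (1 : ℝ≥0∞)) ω * ∏ j, N j ω := by
    intro ω
    have h1 : |(∏ j, truncR (T j) (X j ω)) - ∏ j, X j ω| ≤
        ∑ l, (∏ j ∈ Finset.univ.erase l, |X j ω|) * |truncR (T l) (X l ω) - X l ω| :=
      abs_prod_sub_prod_le Finset.univ _ _ (fun i => abs_truncR_le (hT i).le)
    have h2 : ∀ l, (∏ j ∈ Finset.univ.erase l, |X j ω|) * |truncR (T l) (X l ω) - X l ω|
        ≤ (S l).indicator (fun _ => (1 : ℝ)) ω * ∏ j, |X j ω| := by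
      intro l
      by_cases hmem : ω ∈ S l
      · rw [Set.indicator_of_mem hmem, one_mul,
          ← Finset.prod_erase_mul Finset.univ _ (Finset.mem_univ l)]
        exact mul_le_mul_of_nonneg_left (abs_truncR_sub_le (hT l).le)
          (Finset.prod_nonneg fun j _ => abs_nonneg _)
      · have hle : |X l ω| ≤ T l := le_of_not_ge hmem
        rw [truncR_eq_self hle, sub_self, abs_zero, mul_zero,
          Set.indicator_of_notMem hmem, zero_mul]
    calc ENNReal.ofReal |(∏ j, truncR (T j) (X j ω)) - ∏ j, X j ω|
        ≤ ENNReal.ofReal (∑ l, (S l).indicator (fun _ => (1 : ℝ)) ω * ∏ j, |X j ω|) :=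
          ENNReal.ofReal_le_ofReal (h1.trans (Finset.sum_le_sum fun l _ => h2 l))
      _ = ∑ l, ENNReal.ofReal ((S l).indicator (fun _ => (1 : ℝ)) ω * ∏ j, |X j ω|) :=
          ENNReal.ofReal_sum_of_nonneg fun l _ => mul_nonneg (Set.indicator_nonneg
            (fun _ _ => zero_le_one) ω) (Finset.prod_nonneg fun j _ => abs_nonneg _)
      _ = ∑ l, (S l).indicator (fun _ => (1 : ℝ≥0∞)) ω * ∏ j, N j ω := by
          refine Finset.sum_congr rfl fun l _ => ?_
          rw [ENNReal.ofReal_mul (Set.indicator_nonneg (fun _ _ => zero_le_one) ω),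
            ENNReal.ofReal_prod_of_nonneg fun j _ => abs_nonneg _]
          congr 1
          by_cases hmem : ω ∈ S l <;>
            simp [Set.indicator_of_mem, Set.indicator_of_notMem, hmem]
  -- Hoelder and Markov per index
  have key : ∀ l : Fin d, ∫⁻ ω, (S l).indicator (fun _ => (1 : ℝ≥0∞)) ω * ∏ j, N j ω ∂μ
      ≤ ENNReal.ofReal ((T l) ^ (-(k l * r))
          * (∏ j ∈ Finset.univ.erase l, (E j) ^ (1 / k j))
          * ((E l) ^ ((1 / k l) * (1 + k l * r)))) := by
    intro l
    set f : Option (Fin d) → Ω → ℝ≥0∞ :=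
      fun i ω => i.elim ((S l).indicator (fun _ => (1 : ℝ≥0∞)) ω) (fun j => (N j ω) ^ (k j))
      with hfdef
    set p : Option (Fin d) → ℝ := fun i => i.elim r (fun j => 1 / k j) with hpdef
    have hfm : ∀ i ∈ (Finset.univ : Finset (Option (Fin d))), AEMeasurable (f i) μ := by
      rintro (_ | j) -
      · exact (measurable_const.indicator (hMS l)).aemeasurable
      · exact ((hmN j).pow measurable_const).aemeasurable
    have hpsum : ∑ i : Option (Fin d), p i = 1 := by
      rw [Fintype.sum_option]
      simp only [hpdef, Option.elim, hrdef]
      ring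
    have hpnn : ∀ i ∈ (Finset.univ : Finset (Option (Fin d))), 0 ≤ p i := by
      rintro (_ | j) -
      exacts [hr.le, (one_div_pos.mpr (hk0 j)).le]
    have hold := ENNReal.lintegral_prod_norm_pow_le (μ := μ) Finset.univ hfm hpsum hpnn
    have hLHS : ∀ ω, ∏ i : Option (Fin d), f i ω ^ p i
        = (S l).indicator (fun _ => (1 : ℝ≥0∞)) ω * ∏ j, N j ω := by
      intro ω
      rw [Fintype.prod_option]
      congr 1
      · by_cases hmem : ω ∈ S l
        · simp [hfdef, hpdef, Set.indicator_of_mem hmem]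
        · simp [hfdef, hpdef, Set.indicator_of_notMem hmem, ENNReal.zero_rpow_of_pos hr]
      · refine Finset.prod_congr rfl fun j _ => ?_
        simp only [hfdef, hpdef, Option.elim]
        rw [← ENNReal.rpow_mul, mul_one_div_cancel (hk0 j).ne', ENNReal.rpow_one]
    have hRHS : ∏ i : Option (Fin d), (∫⁻ ω, f i ω ∂μ) ^ p i
        = (μ (S l)) ^ r * ∏ j, (ENNReal.ofReal (E j)) ^ (1 / k j) := by
      rw [Fintype.prod_option]
      congr 1
      · simp only [hfdef, hpdef, Option.elim]
        congr 1
        exact lintegral_indicator_one (hMS l)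
      · exact Finset.prod_congr rfl fun j _ => by
          simp only [hfdef, hpdef, Option.elim]; rw [hEL j]
    have hmarkov : μ (S l) ≤ ENNReal.ofReal (E l) / ENNReal.ofReal (T l ^ (k l)) := by
      have hsub : S l ⊆ {ω | ENNReal.ofReal (T l ^ (k l)) ≤ (N l ω) ^ (k l)} := by
        intro ω hω
        simp only [Set.mem_setOf_eq]
        rw [ENNReal.ofReal_rpow_of_nonneg (abs_nonneg _) (hk0 l).le]
        exact ENNReal.ofReal_le_ofReal (Real.rpow_le_rpow (hT l).le hω (hk0 l).le)
      have hne0 : ENNReal.ofReal (T l ^ (k l)) ≠ 0 := by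
        simp only [ne_eq, ENNReal.ofReal_eq_zero, not_le]
        exact Real.rpow_pos_of_pos (hT l) _
      calc μ (S l) ≤ μ {ω | ENNReal.ofReal (T l ^ (k l)) ≤ (N l ω) ^ (k l)} :=
            measure_mono hsub
        _ ≤ (∫⁻ ω, (N l ω) ^ (k l) ∂μ) / ENNReal.ofReal (T l ^ (k l)) :=
            meas_ge_le_lintegral_div ((hmN l).pow measurable_const).aemeasurable
              hne0 ENNReal.ofReal_ne_top
        _ = ENNReal.ofReal (E l) / ENNReal.ofReal (T l ^ (k l)) := by rw [hEL l]
    have hreal : (E l / T l ^ (k l)) ^ r * ∏ j, (E j) ^ (1 / k j)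
        = (T l) ^ (-(k l * r)) * (∏ j ∈ Finset.univ.erase l, (E j) ^ (1 / k j))
          * (E l) ^ ((1 / k l) * (1 + k l * r)) := by
      have h1 : (E l / T l ^ (k l)) ^ r = (E l) ^ r / (T l) ^ (k l * r) := by
        rw [Real.div_rpow (hEnn l) (Real.rpow_nonneg (hT l).le _), Real.rpow_mul (hT l).le]
      have h2 : ∏ j, (E j) ^ (1 / k j)
          = (∏ j ∈ Finset.univ.erase l, (E j) ^ (1 / k j)) * (E l) ^ (1 / k l) :=
        (Finset.prod_erase_mul _ _ (Finset.mem_univ l)).symm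
      have h3 : (1 / k l) * (1 + k l * r) = 1 / k l + r := by
        have hkl : k l ≠ 0 := (hk0 l).ne'
        field_simp
      have h4 : (E l) ^ (1 / k l + r) = (E l) ^ (1 / k l) * (E l) ^ r :=
        Real.rpow_add_of_nonneg (hEnn l) (one_div_pos.mpr (hk0 l)).le hr.le
      rw [h1, h2, h3, h4, Real.rpow_neg (hT l).le]
      ring
    calc ∫⁻ ω, (S l).indicator (fun _ => (1 : ℝ≥0∞)) ω * ∏ j, N j ω ∂μ
        = ∫⁻ ω, ∏ i : Option (Fin d), f i ω ^ p i ∂μ := by simp_rw [hLHS]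
      _ ≤ ∏ i : Option (Fin d), (∫⁻ ω, f i ω ∂μ) ^ p i := hold
      _ = (μ (S l)) ^ r * ∏ j, (ENNReal.ofReal (E j)) ^ (1 / k j) := hRHS
      _ ≤ (ENNReal.ofReal (E l) / ENNReal.ofReal (T l ^ (k l))) ^ r
            * ∏ j, (ENNReal.ofReal (E j)) ^ (1 / k j) := by
          gcongr
      _ = ENNReal.ofReal ((E l / T l ^ (k l)) ^ r * ∏ j, (E j) ^ (1 / k j)) := by
          have hdivnn : 0 ≤ E l / T l ^ (k l) :=
            div_nonneg (hEnn l) (Real.rpow_nonneg (hT l).le _)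
          rw [ENNReal.ofReal_mul (Real.rpow_nonneg hdivnn _),
            ← ENNReal.ofReal_rpow_of_nonneg hdivnn hr.le,
            ENNReal.ofReal_div_of_pos (Real.rpow_pos_of_pos (hT l) _),
            ENNReal.ofReal_prod_of_nonneg fun j _ => Real.rpow_nonneg (hEnn j) _]
          congr 1
          exact Finset.prod_congr rfl fun j _ =>
            ENNReal.ofReal_rpow_of_nonneg (hEnn j) (one_div_pos.mpr (hk0 j)).le
      _ = ENNReal.ofReal ((T l) ^ (-(k l * r))
            * (∏ j ∈ Finset.univ.erase l, (E j) ^ (1 / k j))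
            * ((E l) ^ ((1 / k l) * (1 + k l * r)))) := by rw [hreal]
  -- assemble
  have habs : |(∫ ω, ∏ j, truncR (T j) (X j ω) ∂μ) - ∫ ω, ∏ j, X j ω ∂μ|
      ≤ ∫ ω, |(∏ j, truncR (T j) (X j ω)) - ∏ j, X j ω| ∂μ := by
    rw [← integral_sub hintA hprod]
    simpa [Real.norm_eq_abs] using
      norm_integral_le_integral_norm (μ := μ)
        (fun ω => (∏ j, truncR (T j) (X j ω)) - ∏ j, X j ω)
  refine habs.trans ?_
  have heq : ∫ ω, |(∏ j, truncR (T j) (X j ω)) - ∏ j, X j ω| ∂μ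
      = (∫⁻ ω, ENNReal.ofReal |(∏ j, truncR (T j) (X j ω)) - ∏ j, X j ω| ∂μ).toReal :=
    integral_eq_lintegral_of_nonneg_ae (ae_of_all _ fun ω => abs_nonneg _)
      (hmA.sub hmB).abs.aestronglyMeasurable
  rw [heq]
  have hBnn : ∀ l, 0 ≤ (T l) ^ (-(k l * r))
      * (∏ j ∈ Finset.univ.erase l, (E j) ^ (1 / k j))
      * ((E l) ^ ((1 / k l) * (1 + k l * r))) := fun l =>
    mul_nonneg (mul_nonneg (Real.rpow_nonneg (hT l).le _)
      (Finset.prod_nonneg fun j _ => Real.rpow_nonneg (hEnn j) _))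
      (Real.rpow_nonneg (hEnn l) _)
  have hlin : (∫⁻ ω, ENNReal.ofReal |(∏ j, truncR (T j) (X j ω)) - ∏ j, X j ω| ∂μ)
      ≤ ∑ l, ENNReal.ofReal ((T l) ^ (-(k l * r))
          * (∏ j ∈ Finset.univ.erase l, (E j) ^ (1 / k j))
          * ((E l) ^ ((1 / k l) * (1 + k l * r)))) := by
    calc ∫⁻ ω, ENNReal.ofReal |(∏ j, truncR (T j) (X j ω)) - ∏ j, X j ω| ∂μ
        ≤ ∫⁻ ω, ∑ l, (S l).indicator (fun _ => (1 : ℝ≥0∞)) ω * ∏ j, N j ω ∂μ :=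
          lintegral_mono hptwise
      _ = ∑ l, ∫⁻ ω, (S l).indicator (fun _ => (1 : ℝ≥0∞)) ω * ∏ j, N j ω ∂μ :=
          lintegral_finset_sum _ fun l _ =>
            (measurable_const.indicator (hMS l)).mul
              (Finset.measurable_prod _ fun j _ => hmN j)
      _ ≤ _ := Finset.sum_le_sum fun l _ => key l
  have hfin : (∑ l, ENNReal.ofReal ((T l) ^ (-(k l * r))
      * (∏ j ∈ Finset.univ.erase l, (E j) ^ (1 / k j))
      * ((E l) ^ ((1 / k l) * (1 + k l * r))))) ≠ ⊤ :=
    (ENNReal.sum_lt_top.mpr fun l _ => ENNReal.ofReal_lt_top).ne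
  calc (∫⁻ ω, ENNReal.ofReal |(∏ j, truncR (T j) (X j ω)) - ∏ j, X j ω| ∂μ).toReal
      ≤ (∑ l, ENNReal.ofReal ((T l) ^ (-(k l * r))
          * (∏ j ∈ Finset.univ.erase l, (E j) ^ (1 / k j))
          * ((E l) ^ ((1 / k l) * (1 + k l * r))))).toReal :=
        ENNReal.toReal_mono hfin hlin
    _ = ∑ l, (T l) ^ (-(k l * r))
          * (∏ j ∈ Finset.univ.erase l, (E j) ^ (1 / k j))
          * ((E l) ^ ((1 / k l) * (1 + k l * r))) := by
        rw [← ENNReal.ofReal_sum_of_nonneg fun l _ => hBnn l,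
          ENNReal.toReal_ofReal (Finset.sum_nonneg fun l _ => hBnn l)]
end

section
/- (Two-point prior construction.) Fix k_1,...,k_d > 1 and 0 < δ < 1. Define P on {−δ^{−1/k_1},0,δ^{−1/k_1}} × ... × {−δ^{−1/k_d},0,δ^{−1/k_d}} by: all coordinates equal 0 with probability 1 − δ, and with probability δ each coordinate X^j independently takes the values ±δ^{−1/k_j} with probability 1/2 each (mixed zero/nonzero patterns have probability 0). Define P* by adding to each atom probability p_{a_1,...,a_d} the perturbation h_{a_1,...,a_d} = (δ/2)(1/2^d)∏_j a_j for (a_1,...,a_d) ∈ {−1,0,1}^d. Then: (i) P* is a probability measure; (ii) E_P|X^j|^{k_j} = E_{P*}|X^j|^{k_j} = 1 for all j; (iii) all strict-subset marginal laws of P and P* coincide; (iv) E_P[∏_j X^j] = 0 and E_{P*}[∏_j X^j] = (1/2)δ^{1 − Σ_j 1/k_j}; (v) d_{TV}(P, P*) ≤ δ/2. -/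
open MeasureTheory Real Finset

namespace Stmt14

/-- Sign values: `0 ↦ −1`, `1 ↦ 0`, `2 ↦ 1`. -/
noncomputable def sgn3 : Fin 3 → ℝ := ![(-1 : ℝ), 0, 1]

/-- The atom of the prior indexed by the sign pattern `a`:
`(a_1 δ^{−1/k_1}, …, a_d δ^{−1/k_d})`. -/
noncomputable def pt (d : ℕ) (k : Fin d → ℝ) (δ : ℝ) (a : Fin d → Fin 3) :
    Fin d → ℝ :=
  fun j => sgn3 (a j) * δ ^ (-(1 / k j))

/-- Atom probabilities of `P`: `1 − δ` if all coordinates vanish, `δ/2^d` if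
none vanishes, `0` for mixed patterns. -/
noncomputable def pwt (d : ℕ) (δ : ℝ) (a : Fin d → Fin 3) : ℝ :=
  if ∀ j, a j = 1 then 1 - δ
  else if ∀ j, a j ≠ 1 then δ / 2 ^ d
  else 0

/-- Perturbation `h_{a} = (δ/2)(1/2^d) ∏_j a_j`. -/
noncomputable def hwt (d : ℕ) (δ : ℝ) (a : Fin d → Fin 3) : ℝ :=
  (δ / 2) * (1 / 2 ^ d) * ∏ j, sgn3 (a j)

/-- The prior `P`. -/
noncomputable def Pmeas (d : ℕ) (k : Fin d → ℝ) (δ : ℝ) : Measure (Fin d → ℝ) :=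
  ∑ a : Fin d → Fin 3, ENNReal.ofReal (pwt d δ a) • Measure.dirac (pt d k δ a)

/-- The perturbed prior `P*`. -/
noncomputable def Pstar (d : ℕ) (k : Fin d → ℝ) (δ : ℝ) : Measure (Fin d → ℝ) :=
  ∑ a : Fin d → Fin 3,
    ENNReal.ofReal (pwt d δ a + hwt d δ a) • Measure.dirac (pt d k δ a)

/-! ### Auxiliary material -/

/-- Sign swap on `Fin 3`: `0 ↔ 2`, fixing `1`. -/
def swap3 : Fin 3 → Fin 3 := ![2, 1, 0]

lemma swap3_swap3 (b : Fin 3) : swap3 (swap3 b) = b := by fin_cases b <;> rfl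

lemma sgn3_swap3 (b : Fin 3) : sgn3 (swap3 b) = - sgn3 b := by
  fin_cases b <;> simp [sgn3, swap3]

lemma swap3_eq_one {b : Fin 3} : swap3 b = 1 ↔ b = 1 := by fin_cases b <;> simp [swap3]

lemma abs_sgn3_of_ne {b : Fin 3} (h : b ≠ 1) : |sgn3 b| = 1 := by
  fin_cases b
  · simp [sgn3]
  · exact absurd rfl h
  · simp [sgn3]

lemma sgn3_one : sgn3 1 = 0 := by simp [sgn3]

/-- The swap of a sign pattern at coordinate `j₀`. -/
def swp {d : ℕ} (j₀ : Fin d) (a : Fin d → Fin 3) : Fin d → Fin 3 :=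
  Function.update a j₀ (swap3 (a j₀))

lemma swp_apply_self {d : ℕ} (j₀ : Fin d) (a : Fin d → Fin 3) :
    swp j₀ a j₀ = swap3 (a j₀) := Function.update_self _ _ _

lemma swp_apply_ne {d : ℕ} (j₀ : Fin d) (a : Fin d → Fin 3) {j : Fin d} (h : j ≠ j₀) :
    swp j₀ a j = a j := Function.update_of_ne h _ _

lemma swp_swp {d : ℕ} (j₀ : Fin d) (a : Fin d → Fin 3) : swp j₀ (swp j₀ a) = a := by
  simp [swp, Function.update_idem, Function.update_self, swap3_swap3,
    Function.update_eq_self]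

lemma swp_eq_one_iff {d : ℕ} (j₀ : Fin d) (a : Fin d → Fin 3) (j : Fin d) :
    swp j₀ a j = 1 ↔ a j = 1 := by
  rcases eq_or_ne j j₀ with rfl | h
  · rw [swp_apply_self]; exact swap3_eq_one
  · rw [swp_apply_ne _ _ h]

/-- Summing a function that is odd under the sign swap at a coordinate gives zero. -/
lemma sum_neg_swap {d : ℕ} (j₀ : Fin d) (s : Finset (Fin d → Fin 3))
    (hs : ∀ a ∈ s, swp j₀ a ∈ s) (W : (Fin d → Fin 3) → ℝ)
    (hW : ∀ a, W (swp j₀ a) = - W a) : ∑ a ∈ s, W a = 0 := by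
  refine Finset.sum_involution (fun a _ => swp j₀ a) (fun a _ => by rw [hW]; ring)
    (fun a _ hWa h => ?_) hs (fun a _ => swp_swp j₀ a)
  apply hWa
  have h' : swp j₀ a = a := h
  have h2 := hW a
  rw [h'] at h2
  linarith

lemma prod_sgn3_swp {d : ℕ} (j₀ : Fin d) (a : Fin d → Fin 3) :
    ∏ j, sgn3 (swp j₀ a j) = - ∏ j, sgn3 (a j) := by
  calc ∏ j, sgn3 (swp j₀ a j)
      = sgn3 (swp j₀ a j₀) * ∏ j ∈ Finset.univ.erase j₀, sgn3 (swp j₀ a j) :=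
        (Finset.mul_prod_erase _ _ (Finset.mem_univ j₀)).symm
    _ = -(sgn3 (a j₀) * ∏ j ∈ Finset.univ.erase j₀, sgn3 (a j)) := by
        rw [swp_apply_self, sgn3_swap3, neg_mul]
        congr 2
        exact Finset.prod_congr rfl fun j hj => by
          rw [swp_apply_ne _ _ (Finset.ne_of_mem_erase hj)]
    _ = - ∏ j, sgn3 (a j) :=
        congrArg (fun z => -z)
          (Finset.mul_prod_erase Finset.univ (fun j => sgn3 (a j)) (Finset.mem_univ j₀))

lemma hwt_swp {d : ℕ} (δ : ℝ) (j₀ : Fin d) (a : Fin d → Fin 3) :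
    hwt d δ (swp j₀ a) = - hwt d δ a := by
  unfold hwt
  rw [prod_sgn3_swp]
  ring

lemma pwt_swp {d : ℕ} (δ : ℝ) (j₀ : Fin d) (a : Fin d → Fin 3) :
    pwt d δ (swp j₀ a) = pwt d δ a := by
  unfold pwt
  simp only [ne_eq, swp_eq_one_iff]

lemma card_all_ne {d : ℕ} :
    ((Finset.univ.filter fun a : Fin d → Fin 3 => ∀ j, a j ≠ 1) : Finset _).card = 2 ^ d := by
  have hb : ∀ b : Fin 3, b ∈ ({0, 2} : Finset (Fin 3)) ↔ b ≠ 1 := by decide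
  have h : (Finset.univ.filter fun a : Fin d → Fin 3 => ∀ j, a j ≠ 1)
      = Fintype.piFinset (fun _ : Fin d => ({0, 2} : Finset (Fin 3))) := by
    ext a
    simp [Fintype.mem_piFinset, hb]
  rw [h, Fintype.card_piFinset]
  simp

lemma sum_if_all_ne {d : ℕ} (c : ℝ) :
    ∑ a : Fin d → Fin 3, (if ∀ j, a j ≠ 1 then c else 0) = 2 ^ d * c := by
  classical
  rw [← Finset.sum_filter, Finset.sum_const, nsmul_eq_mul, card_all_ne]
  push_cast
  ring

lemma abs_prod_sgn3 {d : ℕ} (a : Fin d → Fin 3) :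
    |∏ j, sgn3 (a j)| = if ∀ j, a j ≠ 1 then 1 else 0 := by
  rw [Finset.abs_prod]
  by_cases h : ∀ j, a j ≠ 1
  · rw [if_pos h]
    exact Finset.prod_eq_one fun j _ => abs_sgn3_of_ne (h j)
  · rw [if_neg h]
    push_neg at h
    obtain ⟨j₁, hj₁⟩ := h
    exact Finset.prod_eq_zero (Finset.mem_univ j₁) (by rw [hj₁, sgn3_one, abs_zero])

lemma hwt_eq_zero {d : ℕ} (δ : ℝ) {a : Fin d → Fin 3} {j : Fin d} (h : a j = 1) :
    hwt d δ a = 0 := by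
  unfold hwt
  rw [Finset.prod_eq_zero (Finset.mem_univ j) (by rw [h, sgn3_one]), mul_zero]

lemma abs_hwt {d : ℕ} {δ : ℝ} (hδ0 : 0 < δ) (a : Fin d → Fin 3) :
    |hwt d δ a| = (δ / 2) * (1 / 2 ^ d) * (if ∀ j, a j ≠ 1 then 1 else 0) := by
  unfold hwt
  rw [abs_mul, abs_mul, abs_prod_sgn3, abs_of_pos (by positivity : (0:ℝ) < δ / 2),
    abs_of_pos (by positivity : (0:ℝ) < (1:ℝ) / 2 ^ d)]

lemma pwt_nonneg {d : ℕ} {δ : ℝ} (hδ0 : 0 < δ) (hδ1 : δ < 1) (a : Fin d → Fin 3) :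
    0 ≤ pwt d δ a := by
  unfold pwt
  split_ifs
  · linarith
  · positivity
  · exact le_rfl

lemma pwt_add_hwt_nonneg {d : ℕ} (hd : 1 ≤ d) {δ : ℝ} (hδ0 : 0 < δ) (hδ1 : δ < 1)
    (a : Fin d → Fin 3) : 0 ≤ pwt d δ a + hwt d δ a := by
  by_cases h1 : ∀ j, a j = 1
  · rw [hwt_eq_zero δ (h1 ⟨0, hd⟩), pwt, if_pos h1]
    linarith
  · by_cases h2 : ∀ j, a j ≠ 1
    · have habs : |hwt d δ a| = (δ / 2) * (1 / 2 ^ d) := by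
        rw [abs_hwt hδ0, if_pos h2, mul_one]
      have h3 : -((δ / 2) * (1 / 2 ^ d)) ≤ hwt d δ a := by
        rw [← habs]; exact neg_abs_le _
      rw [pwt, if_neg h1, if_pos h2]
      have h5 : (0:ℝ) < 1 / 2 ^ d := by positivity
      have h6 : δ / 2 ^ d = δ * (1 / 2 ^ d) := by ring
      nlinarith [mul_pos hδ0 h5]
    · push_neg at h2
      obtain ⟨j₁, hj₁⟩ := h2
      rw [hwt_eq_zero δ hj₁, pwt, if_neg h1, if_neg (by push_neg; exact ⟨j₁, hj₁⟩)]
      norm_num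

lemma sum_pwt {d : ℕ} (hd : 1 ≤ d) {δ : ℝ} :
    ∑ a : Fin d → Fin 3, pwt d δ a = 1 := by
  classical
  have hsplit : ∀ a : Fin d → Fin 3, pwt d δ a
      = (if ∀ j, a j = 1 then 1 - δ else 0) + (if ∀ j, a j ≠ 1 then δ / 2 ^ d else 0) := by
    intro a
    unfold pwt
    by_cases h1 : ∀ j, a j = 1
    · rw [if_pos h1, if_pos h1, if_neg (by push_neg; exact ⟨⟨0, hd⟩, h1 _⟩), add_zero]
    · rw [if_neg h1, if_neg h1, zero_add]
  simp only [hsplit]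
  rw [Finset.sum_add_distrib, sum_if_all_ne]
  have h1 : ∀ a : Fin d → Fin 3, (∀ j, a j = 1) ↔ a = fun _ => 1 := by
    intro a; rw [funext_iff]
  simp only [h1]
  rw [Finset.sum_ite_eq' Finset.univ (fun _ => (1 : Fin 3)) (fun _ => (1 : ℝ) - δ),
    if_pos (Finset.mem_univ _)]
  have h2d : (2:ℝ) ^ d ≠ 0 := by positivity
  field_simp
  ring

lemma sum_hwt {d : ℕ} (hd : 1 ≤ d) {δ : ℝ} :
    ∑ a : Fin d → Fin 3, hwt d δ a = 0 :=
  sum_neg_swap ⟨0, hd⟩ _ (fun _ _ => Finset.mem_univ _) _ (fun a => hwt_swp δ _ a)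

open scoped Classical in
/-- Value of a weighted sum of Dirac measures on a measurable set. -/
lemma wsum_apply {d : ℕ} (w : (Fin d → Fin 3) → ℝ) (p : (Fin d → Fin 3) → (Fin d → ℝ))
    {A : Set (Fin d → ℝ)} (hA : MeasurableSet A) :
    (∑ a : Fin d → Fin 3, ENNReal.ofReal (w a) • Measure.dirac (p a)) A
      = ∑ a : Fin d → Fin 3, ENNReal.ofReal (w a * if p a ∈ A then 1 else 0) := by
  classical
  rw [Measure.finset_sum_apply]
  refine Finset.sum_congr rfl fun a _ => ?_
  rw [Measure.smul_apply, Measure.dirac_apply' _ hA]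
  by_cases h : p a ∈ A
  · simp [Set.indicator_of_mem h, h]
  · simp [Set.indicator_of_notMem h, h]

/-- Integral against a weighted sum of Dirac measures. -/
lemma integral_wsum {d : ℕ} (w : (Fin d → Fin 3) → ℝ) (hw : ∀ a, 0 ≤ w a)
    (p : (Fin d → Fin 3) → (Fin d → ℝ)) {f : (Fin d → ℝ) → ℝ} (hf : Measurable f) :
    ∫ x, f x ∂(∑ a : Fin d → Fin 3, ENNReal.ofReal (w a) • Measure.dirac (p a))
      = ∑ a : Fin d → Fin 3, w a * f (p a) := by
  have hint : ∀ a : Fin d → Fin 3, Integrable f (Measure.dirac (p a)) := fun a =>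
    (integrable_const (f (p a))).congr (ae_eq_dirac f).symm
  rw [integral_finset_sum_measure (fun a _ => (hint a).smul_measure ENNReal.ofReal_ne_top)]
  refine Finset.sum_congr rfl fun a _ => ?_
  rw [integral_smul_measure, integral_dirac, ENNReal.toReal_ofReal (hw a), smul_eq_mul]

/-- two-point prior construction: (i) `P*` is a probability
measure (with nonnegative atom weights); (ii) both priors have `k_j`-th absolute
moments equal to `1`; (iii) all strict-subset marginals coincide;
(iv) `E_P[∏_j X^j] = 0` and `E_{P*}[∏_j X^j] = (1/2) δ^{1 − ∑_j 1/k_j}`;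
(v) `d_TV(P, P*) = ∑_a |p_a − p*_a| ≤ δ/2`. -/
theorem stmt_14 (d : ℕ) (hd : 1 ≤ d) (k : Fin d → ℝ) (hk : ∀ j, 1 < k j)
    (δ : ℝ) (hδ0 : 0 < δ) (hδ1 : δ < 1) :
    ((∀ a, 0 ≤ pwt d δ a + hwt d δ a) ∧ IsProbabilityMeasure (Pstar d k δ)) ∧
    (∀ j, (∫ x, |x j| ^ (k j) ∂(Pmeas d k δ)) = 1 ∧
        (∫ x, |x j| ^ (k j) ∂(Pstar d k δ)) = 1) ∧
    (∀ S : Set (Fin d), S ≠ Set.univ →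
        (Pmeas d k δ).map (fun x (j : S) => x j)
          = (Pstar d k δ).map (fun x (j : S) => x j)) ∧
    ((∫ x, ∏ j, x j ∂(Pmeas d k δ)) = 0 ∧
        (∫ x, ∏ j, x j ∂(Pstar d k δ)) = (1 / 2) * δ ^ (1 - ∑ j, 1 / k j)) ∧
    (∑ a : Fin d → Fin 3, |pwt d δ a - (pwt d δ a + hwt d δ a)| ≤ δ / 2) := by
  classical
  have hknz : ∀ j, k j ≠ 0 := fun j => by have := hk j; linarith
  have hnn := pwt_add_hwt_nonneg hd hδ0 hδ1
  have hpnn := pwt_nonneg (d := d) hδ0 hδ1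
  have h2d : (2:ℝ) ^ d ≠ 0 := by positivity
  set c : Fin d → ℝ := fun j => δ ^ (-(1 / k j)) with hc
  have hcpos : ∀ j, 0 < c j := fun j => Real.rpow_pos_of_pos hδ0 _
  -- value of |pt a j| ^ k j
  have hF : ∀ (j : Fin d) (a : Fin d → Fin 3),
      |pt d k δ a j| ^ (k j) = if a j = 1 then 0 else δ⁻¹ := by
    intro j a
    have hpt : pt d k δ a j = sgn3 (a j) * c j := rfl
    by_cases h : a j = 1
    · rw [if_pos h, hpt, h, sgn3_one, zero_mul, abs_zero]
      exact Real.zero_rpow (hknz j)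
    · rw [if_neg h, hpt, abs_mul, abs_sgn3_of_ne h, one_mul, abs_of_pos (hcpos j)]
      show (δ ^ (-(1 / k j))) ^ (k j) = δ⁻¹
      rw [← Real.rpow_mul hδ0.le]
      have hexp : (-(1 / k j)) * k j = -1 := by
        field_simp
        rw [div_self (hknz j)]
      rw [hexp, Real.rpow_neg_one]
  have hmeasF : ∀ j : Fin d, Measurable fun x : Fin d → ℝ => |x j| ^ (k j) := fun j =>
    (Real.continuous_rpow_const (by linarith [hk j])).measurable.comp
      ((measurable_pi_apply j).abs)
  have hmeasP : Measurable fun x : Fin d → ℝ => ∏ j, x j :=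
    Finset.measurable_prod _ fun j _ => measurable_pi_apply j
  -- (i)
  have hsum1 : ∑ a : Fin d → Fin 3, (pwt d δ a + hwt d δ a) = 1 := by
    rw [Finset.sum_add_distrib, sum_pwt hd, sum_hwt hd, add_zero]
  have hprob : IsProbabilityMeasure (Pstar d k δ) := by
    constructor
    rw [Pstar, Measure.finset_sum_apply]
    have hterm : ∀ a : Fin d → Fin 3,
        (ENNReal.ofReal (pwt d δ a + hwt d δ a) • Measure.dirac (pt d k δ a)) Set.univ
          = ENNReal.ofReal (pwt d δ a + hwt d δ a) := by
      intro a
      rw [Measure.smul_apply, measure_univ, smul_eq_mul, mul_one]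
    simp only [hterm]
    rw [← ENNReal.ofReal_sum_of_nonneg (fun a _ => hnn a), hsum1, ENNReal.ofReal_one]
  refine ⟨⟨hnn, hprob⟩, ?_, ?_, ?_, ?_⟩
  -- (ii)
  · intro j
    have hval : ∀ a : Fin d → Fin 3, pwt d δ a * (if a j = 1 then 0 else δ⁻¹)
        = if ∀ j', a j' ≠ 1 then (δ / 2 ^ d) * δ⁻¹ else 0 := by
      intro a
      by_cases h1 : ∀ j', a j' = 1
      · rw [if_pos (h1 j), mul_zero,
          if_neg (show ¬∀ j', a j' ≠ 1 from fun h2 => h2 j (h1 j))]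
      · by_cases h2 : ∀ j', a j' ≠ 1
        · rw [if_pos h2, if_neg (h2 j), pwt, if_neg h1, if_pos h2]
        · rw [if_neg h2, pwt, if_neg h1, if_neg h2, zero_mul]
    have hPint : ∑ a : Fin d → Fin 3, pwt d δ a * |pt d k δ a j| ^ (k j) = 1 := by
      calc ∑ a : Fin d → Fin 3, pwt d δ a * |pt d k δ a j| ^ (k j)
          = ∑ a : Fin d → Fin 3, (if ∀ j', a j' ≠ 1 then (δ / 2 ^ d) * δ⁻¹ else 0) := by
            exact Finset.sum_congr rfl fun a _ => by rw [hF j a, hval a]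
        _ = 2 ^ d * ((δ / 2 ^ d) * δ⁻¹) := sum_if_all_ne _
        _ = 1 := by field_simp
    have hhF0 : ∑ a : Fin d → Fin 3, hwt d δ a * |pt d k δ a j| ^ (k j) = 0 := by
      refine sum_neg_swap j _ (fun _ _ => Finset.mem_univ _) _ (fun a => ?_)
      rw [hF j a, hF j (swp j a), hwt_swp]
      simp only [swp_eq_one_iff]
      ring
    constructor
    · rw [Pmeas, integral_wsum _ hpnn _ (hmeasF j)]
      exact hPint
    · rw [Pstar, integral_wsum _ hnn _ (hmeasF j)]
      simp only [add_mul]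
      rw [Finset.sum_add_distrib, hPint, hhF0, add_zero]
  -- (iii)
  · intro S hS
    obtain ⟨j₀, hj₀⟩ : ∃ j₀, j₀ ∉ S := by
      by_contra h; push_neg at h; exact hS (Set.eq_univ_of_forall h)
    have hπ : Measurable fun x : Fin d → ℝ => fun j : S => x j :=
      measurable_pi_lambda _ fun j => measurable_pi_apply _
    refine Measure.ext fun A hA => ?_
    rw [Measure.map_apply hπ hA, Measure.map_apply hπ hA, Pmeas, Pstar,
      wsum_apply _ _ (hπ hA), wsum_apply _ _ (hπ hA)]
    have hproj : ∀ a : Fin d → Fin 3,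
        (fun j : S => pt d k δ (swp j₀ a) ↑j) = fun j : S => pt d k δ a ↑j := by
      intro a
      funext j
      have hne : (j : Fin d) ≠ j₀ := fun h => hj₀ (h ▸ j.2)
      show sgn3 (swp j₀ a ↑j) * _ = sgn3 (a ↑j) * _
      rw [swp_apply_ne _ _ hne]
    have hχswp : ∀ a : Fin d → Fin 3,
        (if pt d k δ (swp j₀ a) ∈ (fun x (j : S) => x ↑j) ⁻¹' A then (1:ℝ) else 0)
          = if pt d k δ a ∈ (fun x (j : S) => x ↑j) ⁻¹' A then (1:ℝ) else 0 := by
      intro a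
      simp only [Set.mem_preimage, hproj a]
    have hχ01 : ∀ a : Fin d → Fin 3,
        0 ≤ (if pt d k δ a ∈ (fun x (j : S) => x ↑j) ⁻¹' A then (1:ℝ) else 0) := by
      intro a; split_ifs <;> norm_num
    rw [← ENNReal.ofReal_sum_of_nonneg (fun a _ => mul_nonneg (hpnn a) (hχ01 a)),
      ← ENNReal.ofReal_sum_of_nonneg (fun a _ => mul_nonneg (hnn a) (hχ01 a))]
    congr 1
    have hkey : ∑ a : Fin d → Fin 3,
        hwt d δ a * (if pt d k δ a ∈ (fun x (j : S) => x ↑j) ⁻¹' A then (1:ℝ) else 0)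
          = 0 := by
      refine sum_neg_swap j₀ _ (fun _ _ => Finset.mem_univ _) _ (fun a => ?_)
      rw [hwt_swp, hχswp a]
      ring
    simp only [add_mul]
    rw [Finset.sum_add_distrib, hkey, add_zero]
  -- (iv)
  · have hprodpt : ∀ a : Fin d → Fin 3,
        (∏ j, pt d k δ a j) = (∏ j, sgn3 (a j)) * ∏ j, c j := by
      intro a; rw [← Finset.prod_mul_distrib]; rfl
    have hswp_prod : ∀ (j₀ : Fin d) (a : Fin d → Fin 3),
        ∏ j, pt d k δ (swp j₀ a) j = - ∏ j, pt d k δ a j := by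
      intro j₀ a; rw [hprodpt, hprodpt, prod_sgn3_swp]; ring
    have hP0 : ∑ a : Fin d → Fin 3, pwt d δ a * ∏ j, pt d k δ a j = 0 := by
      refine sum_neg_swap ⟨0, hd⟩ _ (fun _ _ => Finset.mem_univ _) _ (fun a => ?_)
      rw [pwt_swp, hswp_prod]
      ring
    have hterm : ∀ a : Fin d → Fin 3, hwt d δ a * ∏ j, pt d k δ a j
        = if ∀ j, a j ≠ 1 then (δ / 2) * (1 / 2 ^ d) * ∏ j, c j else 0 := by
      intro a
      rw [hprodpt, hwt]
      by_cases h : ∀ j, a j ≠ 1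
      · rw [if_pos h]
        have hsq : (∏ j, sgn3 (a j)) * (∏ j, sgn3 (a j)) = 1 := by
          have habs := abs_prod_sgn3 a
          rw [if_pos h] at habs
          rw [← abs_mul_abs_self, habs, mul_one]
        calc (δ / 2 * (1 / 2 ^ d) * ∏ j, sgn3 (a j)) * ((∏ j, sgn3 (a j)) * ∏ j, c j)
            = δ / 2 * (1 / 2 ^ d) * ((∏ j, sgn3 (a j)) * (∏ j, sgn3 (a j))) * ∏ j, c j := by
              ring
          _ = δ / 2 * (1 / 2 ^ d) * ∏ j, c j := by rw [hsq, mul_one]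
      · rw [if_neg h]
        push_neg at h
        obtain ⟨j₁, hj₁⟩ := h
        rw [Finset.prod_eq_zero (Finset.mem_univ j₁) (by rw [hj₁, sgn3_one])]
        ring
    have hC : ∏ j, c j = δ ^ (-∑ j, 1 / k j) := by
      have h1 := Real.rpow_sum_of_pos hδ0 (fun j => -(1 / k j)) Finset.univ
      rw [← h1]
      congr 1
      rw [← Finset.sum_neg_distrib]
    constructor
    · rw [Pmeas, integral_wsum _ hpnn _ hmeasP]
      exact hP0
    · rw [Pstar, integral_wsum _ hnn _ hmeasP]
      simp only [add_mul]
      rw [Finset.sum_add_distrib, hP0, zero_add]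
      calc ∑ a : Fin d → Fin 3, hwt d δ a * ∏ j, pt d k δ a j
          = ∑ a : Fin d → Fin 3,
              (if ∀ j, a j ≠ 1 then (δ / 2) * (1 / 2 ^ d) * ∏ j, c j else 0) :=
            Finset.sum_congr rfl fun a _ => hterm a
        _ = 2 ^ d * ((δ / 2) * (1 / 2 ^ d) * ∏ j, c j) := sum_if_all_ne _
        _ = (δ / 2) * ∏ j, c j := by field_simp
        _ = (1 / 2) * δ ^ (1 - ∑ j, 1 / k j) := by
            rw [hC, sub_eq_add_neg, Real.rpow_add hδ0, Real.rpow_one]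
            ring
  -- (v)
  · have habs : ∀ a : Fin d → Fin 3,
        |pwt d δ a - (pwt d δ a + hwt d δ a)| = |hwt d δ a| := by
      intro a
      have h : pwt d δ a - (pwt d δ a + hwt d δ a) = -(hwt d δ a) := by ring
      rw [h, abs_neg]
    calc ∑ a : Fin d → Fin 3, |pwt d δ a - (pwt d δ a + hwt d δ a)|
        = ∑ a : Fin d → Fin 3, (if ∀ j, a j ≠ 1 then (δ / 2) * (1 / 2 ^ d) else 0) := by
          refine Finset.sum_congr rfl fun a _ => ?_
          rw [habs a, abs_hwt hδ0, mul_ite, mul_one, mul_zero]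
      _ = 2 ^ d * ((δ / 2) * (1 / 2 ^ d)) := sum_if_all_ne _
      _ = δ / 2 := by field_simp
      _ ≤ δ / 2 := le_rfl

end Stmt14
end
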